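/- If functions ρ and and ρm both satisfy the DG upwind conservative weak form (with the same upwind velocity and facet structure), and m ≡ C is spatially constant (so jumps [[m]] = 0 and (ρm)† = Cρ† at every facet), then the weak form equation for ρm equals C times the weak-form equation for ρ; hence a constant mixing ratio is preserved exactly by the semi-discrete conservative tracer scheme. -/
import Mathlib


open MeasureTheory

/-- If the mixing ratio is spatially constant, m ≡ C, so that the tracer field
is ρm = Cρ with upwind trace (ρm)† = Cρ†, then every term of the DG upwind
conservative weak form for ρm equals C times the corresponding term for ρ;
hence the constant mixing ratio is preserved by the semi-discrete scheme. -/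
theorem dg_constant_mixing_ratio_consistency
    {α β : Type*} [MeasurableSpace α] (μ : Measure α)
    (V : Submodule ℝ (α → ℝ))
    (ρ : α → ℝ → ℝ) (hρ : ∀ x, Differentiable ℝ (ρ x))
    -- upwind trace ρ† on the set of interior facets (indexed by β), at time t
    (ρdag : ℝ → β → ℝ)
    -- facet functional (η, q†) ↦ ∫_Γ (u⁺·n̂⁺)[[η]]q† and volume functional
    -- (η, q) ↦ ∫_Ω q (u·∇)η
    (Fac : (α → ℝ) → (β → ℝ) → ℝ) (Vol : (α → ℝ) → (α → ℝ) → ℝ)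
    -- both functionals are homogeneous (linear) in the transported field
    (hFac : ∀ η : α → ℝ, ∀ c : ℝ, ∀ g : β → ℝ, Fac η (c • g) = c * Fac η g)
    (hVol : ∀ η : α → ℝ, ∀ c : ℝ, ∀ q : α → ℝ, Vol η (c • q) = c * Vol η q)
    (C : ℝ) (m : α → ℝ → ℝ) (hm : ∀ x t, m x t = C)
    (hint : ∀ (η : α → ℝ) (t : ℝ),
      Integrable (fun x => η x * deriv (fun s => ρ x s) t) μ) :
    ∀ η ∈ V, ∀ t : ℝ,
      (∫ x, η x * deriv (fun s => ρ x s * m x s) t ∂μ)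
          + Fac η (C • ρdag t) - Vol η (C • fun x => ρ x t)
        = C * ((∫ x, η x * deriv (fun s => ρ x s) t ∂μ)
          + Fac η (ρdag t) - Vol η (fun x => ρ x t)) := by
  intro η hη t
  have hd : (∫ x, η x * deriv (fun s => ρ x s * m x s) t ∂μ)
      = C * ∫ x, η x * deriv (fun s => ρ x s) t ∂μ := by
    rw [← integral_const_mul]
    congr 1
    funext x
    have : (fun s => ρ x s * m x s) = fun s => ρ x s * C := by
      funext s; rw [hm]
    rw [this]
    have := deriv_mul_const (c := fun s => ρ x s) (hρ x t) C
    rw [this]; ring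
  rw [hd, hFac, hVol]; ring
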